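/- For every coordination strategy d, the expected cost satisfies 𝒥(d) ≥ V₁(π₁); that is, the dynamic-programming value at the initial belief is a lower bound on the expected cost of every coordination strategy. -/

import Mathlib

open Finset

noncomputable section

/-- Likelihood `ℓ(γ,m,u) = ∏_i γ(m^i)^{u^i} (1-γ(m^i))^{1-u^i}`. -/
def ell {n : ℕ} {M : Type} (γ : M → ℝ) (m : Fin n → M) (u : Fin n → Bool) : ℝ :=
  ∏ i : Fin n, if u i then γ (m i) else 1 - γ (m i)

/-- `P(u|π,γ) = Σ_m π(m) ℓ(γ,m,u)`. -/
def Pout {n : ℕ} {M : Type} [Fintype M]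
    (π : (Fin n → M) → ℝ) (γ : M → ℝ) (u : Fin n → Bool) : ℝ :=
  ∑ m : Fin n → M, π m * ell γ m u

open Classical in
/-- Updated belief `η(π,γ,u)(m) = π(m) ℓ(γ,m,u)/P(u|π,γ)` when `P(u|π,γ) ≠ 0`
(and `η(π,γ,u) = π` when `P(u|π,γ) = 0`, an arbitrary convention). -/
def etaUpd {n : ℕ} {M : Type} [Fintype M]
    (π : (Fin n → M) → ℝ) (γ : M → ℝ) (u : Fin n → Bool) : (Fin n → M) → ℝ :=
  fun m => if Pout π γ u = 0 then π m else π m * ell γ m u / Pout π γ u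

/-- One step of the dynamic-programming recursion: the expected current cost plus the
expected cost-to-go `W` at the updated belief,
`Σ_m Σ_u π(m) ℓ(γ,m,u) k(m,u) + Σ_u P(u|π,γ) W(η(π,γ,u))`
(any term with `P(u|π,γ) = 0` vanishes). -/
def stepVal {n : ℕ} {M : Type} [Fintype M]
    (k : (Fin n → M) → (Fin n → Bool) → ℝ)
    (W : ((Fin n → M) → ℝ) → ℝ)
    (π : (Fin n → M) → ℝ) (γ : M → ℝ) : ℝ :=
  (∑ m : Fin n → M, ∑ u : Fin n → Bool, π m * ell γ m u * k m u) +
    ∑ u : Fin n → Bool, Pout π γ u * W (etaUpd π γ u)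

/-- The set of prescriptions: maps `γ : M → [0,1]`. -/
def prescriptions (M : Type) : Set (M → ℝ) :=
  {γ | ∀ a, γ a ∈ Set.Icc (0 : ℝ) 1}

/-- The simplex of probability distributions on `𝓜^n`. -/
def simplex (n : ℕ) (M : Type) [Fintype M] : Set ((Fin n → M) → ℝ) :=
  {π | (∀ m, 0 ≤ π m) ∧ ∑ m : Fin n → M, π m = 1}

/-- The prefix `u_{1:t-1}` of a full action sequence, at time `t`. -/
def pre {n T : ℕ} (u : Fin T → Fin n → Bool) (t : Fin T) : Fin t.1 → Fin n → Bool :=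
  fun s => u ⟨s.1, s.2.trans t.2⟩

/-- Expected total cost `𝒥(d)` of a coordination strategy `d`. -/
def Jcoord {n T : ℕ} {M : Type} [Fintype M]
    (π₁ : (Fin n → M) → ℝ)
    (k : Fin T → (Fin n → M) → (Fin n → Bool) → ℝ)
    (d : ∀ t : Fin T, (Fin t.1 → Fin n → Bool) → M → ℝ) : ℝ :=
  ∑ m : Fin n → M, π₁ m *
    ∑ u : Fin T → Fin n → Bool,
      (∏ t : Fin T, ell (d t (pre u t)) m (u t)) * (∑ t : Fin T, k t m (u t))

/-!
Any coordination strategy `d` uses some prescription `γ = d₁` at the first step. By the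
recursion defining `V₁`, `V₁(π₁) ≤ E[k₁] + Σ_u P(u|π₁,γ) V₂(η(π₁,γ,u))`. Conditioned on the
first joint action `u`, the remainder of `d` is a coordination strategy for the problem with
horizon `T - 1` started from the posterior `η(π₁,γ,u)`, so by induction on the horizon its
cost dominates `V₂(η(π₁,γ,u))`; and `𝒥(d)` splits exactly into `E[k₁]` plus the
`P(u|π₁,γ)`-average of these continuation costs. The infimum in the recursion is finite since,
again by induction, every `V_t` is bounded below on the simplex.
-/

lemma sum_fin_succ_fun {A : Type} [Fintype A] (r : ℕ) (F : (Fin (r + 1) → A) → ℝ) :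
    ∑ w, F w = ∑ a, ∑ w : Fin r → A, F (Fin.cons a w) := by
  rw [← Equiv.sum_comp (Fin.consEquiv fun _ => A) F, Fintype.sum_prod_type]
  rfl

section Likelihood

variable {n : ℕ} {M : Type}

lemma zero_mem_prescriptions : (0 : M → ℝ) ∈ prescriptions M :=
  fun _ => ⟨le_rfl, zero_le_one⟩

lemma ite_mem_Icc_of_mem_prescriptions {γ : M → ℝ} (hγ : γ ∈ prescriptions M) (a : M)
    (b : Bool) : (if b then γ a else 1 - γ a) ∈ Set.Icc (0 : ℝ) 1 := by
  obtain ⟨h0, h1⟩ := hγ a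
  constructor <;> split <;> linarith

lemma ell_nonneg {γ : M → ℝ} (hγ : γ ∈ prescriptions M) (m : Fin n → M) (u : Fin n → Bool) :
    0 ≤ ell γ m u :=
  prod_nonneg fun i _ => (ite_mem_Icc_of_mem_prescriptions hγ (m i) (u i)).1

lemma ell_le_one {γ : M → ℝ} (hγ : γ ∈ prescriptions M) (m : Fin n → M) (u : Fin n → Bool) :
    ell γ m u ≤ 1 :=
  prod_le_one (fun i _ => (ite_mem_Icc_of_mem_prescriptions hγ (m i) (u i)).1)
    fun i _ => (ite_mem_Icc_of_mem_prescriptions hγ (m i) (u i)).2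

lemma sum_ell (γ : M → ℝ) (m : Fin n → M) : ∑ u, ell γ m u = 1 := by
  simp only [ell, ← Fintype.prod_sum (fun i (b : Bool) => if b then γ (m i) else 1 - γ (m i)),
    Fintype.sum_bool, if_true, Bool.false_eq_true, if_false, add_sub_cancel, prod_const_one]

variable [Fintype M] {π : (Fin n → M) → ℝ} {γ : M → ℝ}

lemma le_one_of_mem_simplex (hπ : π ∈ simplex n M) (m : Fin n → M) : π m ≤ 1 :=
  hπ.2 ▸ single_le_sum (fun m' _ => hπ.1 m') (mem_univ m)

lemma Pout_nonneg (hπ : π ∈ simplex n M) (hγ : γ ∈ prescriptions M) (u : Fin n → Bool) :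
    0 ≤ Pout π γ u :=
  sum_nonneg fun m _ => mul_nonneg (hπ.1 m) (ell_nonneg hγ m u)

lemma sum_Pout (hπ : π ∈ simplex n M) (γ : M → ℝ) : ∑ u, Pout π γ u = 1 := by
  simp only [Pout]
  rw [sum_comm]
  simp only [← mul_sum, sum_ell, mul_one, hπ.2]

lemma etaUpd_mem_simplex (hπ : π ∈ simplex n M) (hγ : γ ∈ prescriptions M) (u : Fin n → Bool) :
    etaUpd π γ u ∈ simplex n M := by
  by_cases hP : Pout π γ u = 0
  · rwa [show etaUpd π γ u = π from funext fun m => if_pos hP]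
  · simp only [simplex, etaUpd, hP, if_false, Set.mem_ofPred_eq, ← sum_div]
    exact ⟨fun m => div_nonneg (mul_nonneg (hπ.1 m) (ell_nonneg hγ m u)) (Pout_nonneg hπ hγ u),
      div_self hP⟩

-- Bayes' rule; it holds also when `P(u|π,γ) = 0`, where both sides vanish.
lemma Pout_mul_etaUpd (hπ : π ∈ simplex n M) (hγ : γ ∈ prescriptions M) (u : Fin n → Bool)
    (m : Fin n → M) : Pout π γ u * etaUpd π γ u m = π m * ell γ m u := by
  by_cases hP : Pout π γ u = 0
  · have hterm := (sum_eq_zero_iff_of_nonneg fun m _ =>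
      mul_nonneg (hπ.1 m) (ell_nonneg hγ m u)).mp hP m (mem_univ m)
    rw [hP, zero_mul, hterm]
  · rw [etaUpd, if_neg hP, mul_div_cancel₀ _ hP]

end Likelihood

section Trajectories

variable {n T : ℕ} {M : Type}

def pathProb (d : ∀ t : Fin T, (Fin t.1 → Fin n → Bool) → M → ℝ) (m : Fin n → M)
    (u : Fin T → Fin n → Bool) : ℝ :=
  ∏ t, ell (d t (pre u t)) m (u t)

def tailStrategy (d : ∀ t : Fin (T + 1), (Fin t.1 → Fin n → Bool) → M → ℝ)
    (u : Fin n → Bool) : ∀ t : Fin T, (Fin t.1 → Fin n → Bool) → M → ℝ :=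
  fun t c => d t.succ (Fin.cons u c)

lemma pre_cons_succ (u : Fin n → Bool) (w : Fin T → Fin n → Bool) (t : Fin T) :
    pre (Fin.cons u w : Fin (T + 1) → Fin n → Bool) t.succ = Fin.cons u (pre w t) := by
  funext s
  refine Fin.cases rfl (fun i => ?_) s
  exact Fin.cons_succ (α := fun _ => Fin n → Bool) u w ⟨i, i.2.trans t.2⟩

lemma pathProb_cons (d : ∀ t : Fin (T + 1), (Fin t.1 → Fin n → Bool) → M → ℝ)
    (m : Fin n → M) (u : Fin n → Bool) (w : Fin T → Fin n → Bool) :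
    pathProb d m (Fin.cons u w) = ell (d 0 Fin.elim0) m u * pathProb (tailStrategy d u) m w := by
  rw [pathProb, Fin.prod_univ_succ]
  congr 1
  · rw [Fin.cons_zero]
    congr 2
    exact funext fun s => s.elim0
  · refine prod_congr rfl fun t _ => ?_
    rw [pre_cons_succ, Fin.cons_succ]
    rfl

lemma sum_pathProb (d : ∀ t : Fin T, (Fin t.1 → Fin n → Bool) → M → ℝ) (m : Fin n → M) :
    ∑ u, pathProb d m u = 1 := by
  induction T with
  | zero => simp [pathProb]
  | succ T ih =>
    simp only [sum_fin_succ_fun, pathProb_cons, ← mul_sum, ih, mul_one, sum_ell]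

def condCost (k : Fin T → (Fin n → M) → (Fin n → Bool) → ℝ)
    (d : ∀ t : Fin T, (Fin t.1 → Fin n → Bool) → M → ℝ) (m : Fin n → M) : ℝ :=
  ∑ u, pathProb d m u * ∑ t, k t m (u t)

lemma condCost_succ (k : Fin (T + 1) → (Fin n → M) → (Fin n → Bool) → ℝ)
    (d : ∀ t : Fin (T + 1), (Fin t.1 → Fin n → Bool) → M → ℝ) (m : Fin n → M) :
    condCost k d m = ∑ u, ell (d 0 Fin.elim0) m u *
      (k 0 m u + condCost (fun t => k t.succ) (tailStrategy d u) m) := by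
  rw [condCost, sum_fin_succ_fun]
  refine sum_congr rfl fun u _ => ?_
  simp only [pathProb_cons, Fin.sum_univ_succ, Fin.cons_zero, Fin.cons_succ, condCost, mul_add,
    sum_add_distrib, mul_assoc, ← mul_sum, ← sum_mul, sum_pathProb, one_mul]

variable [Fintype M]

lemma Jcoord_eq_sum_condCost (π : (Fin n → M) → ℝ)
    (k : Fin T → (Fin n → M) → (Fin n → Bool) → ℝ)
    (d : ∀ t : Fin T, (Fin t.1 → Fin n → Bool) → M → ℝ) :
    Jcoord π k d = ∑ m, π m * condCost k d m :=
  rfl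

lemma Jcoord_succ {π : (Fin n → M) → ℝ} (hπ : π ∈ simplex n M)
    (k : Fin (T + 1) → (Fin n → M) → (Fin n → Bool) → ℝ)
    (d : ∀ t : Fin (T + 1), (Fin t.1 → Fin n → Bool) → M → ℝ)
    (hγ : d 0 Fin.elim0 ∈ prescriptions M) :
    Jcoord π k d = (∑ m, ∑ u, π m * ell (d 0 Fin.elim0) m u * k 0 m u) +
      ∑ u, Pout π (d 0 Fin.elim0) u *
        Jcoord (etaUpd π (d 0 Fin.elim0) u) (fun t => k t.succ) (tailStrategy d u) := by
  simp only [Jcoord_eq_sum_condCost, condCost_succ, mul_sum, ← mul_assoc,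
    Pout_mul_etaUpd hπ hγ, mul_add, sum_add_distrib]
  rw [sum_comm (f := fun m u => π m * ell _ m u * condCost _ _ m)]

end Trajectories

section Value

variable {n : ℕ} {M : Type} [Fintype M] {π : (Fin n → M) → ℝ} {γ : M → ℝ}

lemma le_stepVal (k : (Fin n → M) → (Fin n → Bool) → ℝ) {W : ((Fin n → M) → ℝ) → ℝ} {c : ℝ}
    (hc : c ∈ lowerBounds (W '' simplex n M)) (hπ : π ∈ simplex n M)
    (hγ : γ ∈ prescriptions M) :
    c - ∑ m, ∑ u, |k m u| ≤ stepVal k W π γ := by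
  have hcost : -∑ m, ∑ u, |k m u| ≤ ∑ m, ∑ u, π m * ell γ m u * k m u := by
    simp only [← sum_neg_distrib]
    refine sum_le_sum fun m _ => sum_le_sum fun u _ => ?_
    have h0 : 0 ≤ π m * ell γ m u := mul_nonneg (hπ.1 m) (ell_nonneg hγ m u)
    have h1 : π m * ell γ m u ≤ 1 :=
      mul_le_one₀ (le_one_of_mem_simplex hπ m) (ell_nonneg hγ m u) (ell_le_one hγ m u)
    nlinarith [neg_abs_le (k m u), abs_nonneg (k m u)]
  have hfuture : c ≤ ∑ u, Pout π γ u * W (etaUpd π γ u) :=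
    calc c = ∑ u, Pout π γ u * c := by rw [← sum_mul, sum_Pout hπ, one_mul]
      _ ≤ _ := sum_le_sum fun u _ => mul_le_mul_of_nonneg_left
        (hc (Set.mem_image_of_mem W (etaUpd_mem_simplex hπ hγ u))) (Pout_nonneg hπ hγ u)
  rw [stepVal]
  linarith

lemma bddBelow_stepVal_image (k : (Fin n → M) → (Fin n → Bool) → ℝ)
    {W : ((Fin n → M) → ℝ) → ℝ} (hW : BddBelow (W '' simplex n M)) (hπ : π ∈ simplex n M) :
    BddBelow ((fun γ => stepVal k W π γ) '' prescriptions M) := by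
  obtain ⟨c, hc⟩ := hW
  exact ⟨c - ∑ m, ∑ u, |k m u|, Set.forall_mem_image.2 fun γ hγ => le_stepVal k hc hπ hγ⟩

lemma bddBelow_value_image {T : ℕ} (k : Fin T → (Fin n → M) → (Fin n → Bool) → ℝ)
    (V : ℕ → ((Fin n → M) → ℝ) → ℝ) (hVT : ∀ π, V T π = 0)
    (hV : ∀ t : Fin T, ∀ π, V t.1 π =
      sInf ((fun γ => stepVal (k t) (V (t.1 + 1)) π γ) '' prescriptions M)) :
    BddBelow (V 0 '' simplex n M) := by
  induction T generalizing V with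
  | zero => exact ⟨0, Set.forall_mem_image.2 fun π _ => (hVT π).ge⟩
  | succ T ih =>
    obtain ⟨c, hc⟩ := ih (fun t => k t.succ) (fun j => V (j + 1)) hVT fun t => hV t.succ
    refine ⟨c - ∑ m, ∑ u, |k 0 m u|, Set.forall_mem_image.2 fun π hπ => ?_⟩
    refine (le_csInf (Set.image_nonempty.2 ⟨0, zero_mem_prescriptions⟩) ?_).trans_eq (hV 0 π).symm
    exact Set.forall_mem_image.2 fun γ hγ => le_stepVal _ hc hπ hγ

end Value

/-- Times are 0-indexed: `V 0` is the paper's `V₁` and `V T` is the terminal `V_{T+1}`. -/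
theorem dp_value_lower_bounds_every_coordination_strategy_general
    (n T : ℕ)
    (M : Type) [Fintype M]
    (π₁ : (Fin n → M) → ℝ) (hπ₁ : π₁ ∈ simplex n M)
    (k : Fin T → (Fin n → M) → (Fin n → Bool) → ℝ)
    (V : ℕ → ((Fin n → M) → ℝ) → ℝ)
    (hVT : ∀ π, V T π = 0)
    (hV : ∀ t : Fin T, ∀ π, V t.1 π =
      sInf ((fun γ => stepVal (k t) (V (t.1 + 1)) π γ) '' prescriptions M))
    (d : ∀ t : Fin T, (Fin t.1 → Fin n → Bool) → M → ℝ)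
    (hd : ∀ t c a, d t c a ∈ Set.Icc (0 : ℝ) 1) :
    V 0 π₁ ≤ Jcoord π₁ k d := by
  induction T generalizing π₁ V with
  | zero => simp [hVT, Jcoord]
  | succ T ih =>
    have hγ : d 0 Fin.elim0 ∈ prescriptions M := hd 0 _
    have hV₁ : BddBelow (V 1 '' simplex n M) :=
      bddBelow_value_image (fun t => k t.succ) (fun j => V (j + 1)) hVT fun t => hV t.succ
    rw [Jcoord_succ hπ₁ k d hγ]
    calc V 0 π₁ ≤ stepVal (k 0) (V 1) π₁ (d 0 Fin.elim0) :=
          (hV 0 π₁).trans_le (csInf_le (bddBelow_stepVal_image _ hV₁ hπ₁) ⟨_, hγ, rfl⟩)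
      _ ≤ _ := by
        rw [stepVal]
        gcongr with u
        · exact Pout_nonneg hπ₁ hγ u
        · exact ih _ (etaUpd_mem_simplex hπ₁ hγ u) (fun t => k t.succ) (fun j => V (j + 1)) hVT
            (fun t => hV t.succ) (tailStrategy d u) fun t c => hd t.succ _

/-- The dynamic-programming value at the initial belief lower-bounds the expected cost
of every coordination strategy: `𝒥(d) ≥ V₁(π₁)`.
(Times are 0-indexed: `V 0` is the paper's `V₁` and `V T` is the terminal `V_{T+1}`.) -/
theorem dp_value_lower_bounds_every_coordination_strategy
    (n T : ℕ) (hn : 1 ≤ n) (hT : 1 ≤ T)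
    (M : Type) [Fintype M] [Nonempty M]
    (π₁ : (Fin n → M) → ℝ) (hπ₁ : π₁ ∈ simplex n M)
    (k : Fin T → (Fin n → M) → (Fin n → Bool) → ℝ)
    (V : ℕ → ((Fin n → M) → ℝ) → ℝ)
    (hVT : ∀ π, V T π = 0)
    (hV : ∀ t : Fin T, ∀ π, V t.1 π =
      sInf ((fun γ => stepVal (k t) (V (t.1 + 1)) π γ) '' prescriptions M))
    (hAtt : ∀ t : Fin T, ∀ π ∈ simplex n M,
      ∃ γ ∈ prescriptions M, stepVal (k t) (V (t.1 + 1)) π γ = V t.1 π)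
    (d : ∀ t : Fin T, (Fin t.1 → Fin n → Bool) → M → ℝ)
    (hd : ∀ t c a, d t c a ∈ Set.Icc (0 : ℝ) 1) :
    V 0 π₁ ≤ Jcoord π₁ k d :=
  dp_value_lower_bounds_every_coordination_strategy_general n T M π₁ hπ₁ k V hVT hV d hd
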